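/- Let N ≥ 1, let 0 ≤ κ < 1, let n ∈ ℝ^N with Euclidean norm |n| = 1, and let 𝒜₁, 𝒜₂ be real N×N matrices with operator norms ‖𝒜₁ - I‖ ≤ κ and ‖𝒜₂ - I‖ ≤ κ. Then 𝒜₁n ≠ 0 and 𝒜₂n ≠ 0, and the difference of the normalized images satisfies | 𝒜₂n/|𝒜₂n| - 𝒜₁n/|𝒜₁n| | ≤ (2/(1 - κ)) · ‖𝒜₂ - 𝒜₁‖. -/

import Mathlib

open Real

/-- A vector of `ℝ^N` regarded as an element of Euclidean space (with the `ℓ²` norm). -/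
noncomputable def euc {N : ℕ} (v : Fin N → ℝ) : EuclideanSpace ℝ (Fin N) := WithLp.toLp 2 v

/-- The operator norm of an `N × N` real matrix acting on Euclidean space. -/
noncomputable def matOpNorm {N : ℕ} (A : Matrix (Fin N) (Fin N) ℝ) : ℝ :=
  ‖Matrix.toEuclideanCLM (𝕜 := ℝ) A‖

/-!
Write `Tᵢ` for the operator of `𝒜ᵢ`. Since `‖T - 1‖ ≤ κ`, `T` moves a unit vector `n` by at most
`κ`, so `|Tn| ≥ 1 - κ > 0`. Normalization is Lipschitz away from the origin:
`|y/|y| - x/|x|| ≤ 2|y - x|/|y|`, and `|T₂n - T₁n| ≤ ‖T₂ - T₁‖`.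
-/

open NormedSpace

section NormedSpace

variable {E : Type*} [NormedAddCommGroup E] [NormedSpace ℝ E]

theorem norm_normalize_sub_normalize_le (x : E) {y : E} (hy : y ≠ 0) :
    ‖normalize y - normalize x‖ ≤ 2 * ‖y - x‖ / ‖y‖ := by
  have hy₀ : 0 < ‖y‖ := norm_pos_iff.mpr hy
  have hsplit : normalize y - normalize x = ‖y‖⁻¹ • (y - x) + (‖y‖⁻¹ - ‖x‖⁻¹) • x := by
    simp only [NormedSpace.normalize, smul_sub, sub_smul]; abel
  -- its norm is `|‖x‖ - ‖y‖| / ‖y‖`, for `x ≠ 0`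
  have hcorr : ‖(‖y‖⁻¹ - ‖x‖⁻¹) • x‖ ≤ ‖y - x‖ / ‖y‖ := by
    rcases eq_or_ne x 0 with rfl | hx
    · simp only [smul_zero, norm_zero]; positivity
    have hx₀ : 0 < ‖x‖ := norm_pos_iff.mpr hx
    rw [norm_smul, Real.norm_eq_abs, inv_sub_inv hy₀.ne' hx₀.ne', abs_div,
      abs_of_pos (mul_pos hy₀ hx₀), abs_sub_comm, div_mul_eq_mul_div,
      mul_div_mul_right _ _ hx₀.ne']
    gcongr
    exact abs_norm_sub_norm_le y x
  calc ‖normalize y - normalize x‖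
      ≤ ‖‖y‖⁻¹ • (y - x)‖ + ‖(‖y‖⁻¹ - ‖x‖⁻¹) • x‖ := hsplit ▸ norm_add_le _ _
    _ ≤ ‖y - x‖ / ‖y‖ + ‖y - x‖ / ‖y‖ := by
        gcongr
        rw [norm_smul, norm_inv, norm_norm, inv_mul_eq_div]
    _ = 2 * ‖y - x‖ / ‖y‖ := by ring

theorem ContinuousLinearMap.mul_norm_le_norm_apply_of_norm_sub_one_le {T : E →L[ℝ] E} {κ : ℝ}
    (hT : ‖T - 1‖ ≤ κ) (x : E) : (1 - κ) * ‖x‖ ≤ ‖T x‖ := by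
  have hmove : ‖x - T x‖ ≤ κ * ‖x‖ :=
    calc ‖x - T x‖ = ‖(T - 1) x‖ := by
          rw [sub_apply, one_apply_eq_self, norm_sub_rev]
      _ ≤ κ * ‖x‖ := (T - 1).le_of_opNorm_le hT x
  linarith [norm_sub_norm_le x (T x)]

theorem ContinuousLinearMap.norm_normalize_apply_sub_le {T₁ T₂ : E →L[ℝ] E} {κ : ℝ}
    (hκ : κ < 1) (hT₂ : ‖T₂ - 1‖ ≤ κ) {x : E} (hx : ‖x‖ = 1) :
    ‖normalize (T₂ x) - normalize (T₁ x)‖ ≤ 2 / (1 - κ) * ‖T₂ - T₁‖ := by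
  have hlower : 1 - κ ≤ ‖T₂ x‖ := by
    simpa [hx] using T₂.mul_norm_le_norm_apply_of_norm_sub_one_le hT₂ x
  have hdiff : ‖T₂ x - T₁ x‖ ≤ ‖T₂ - T₁‖ := by
    simpa [hx] using (T₂ - T₁).le_opNorm x
  have hne : T₂ x ≠ 0 := norm_pos_iff.mp (by linarith)
  calc ‖normalize (T₂ x) - normalize (T₁ x)‖
      ≤ 2 * ‖T₂ x - T₁ x‖ / ‖T₂ x‖ := norm_normalize_sub_normalize_le _ hne
    _ ≤ 2 * ‖T₂ - T₁‖ / (1 - κ) := by gcongr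
    _ = 2 / (1 - κ) * ‖T₂ - T₁‖ := by ring

end NormedSpace

theorem euc_mulVec {N : ℕ} (A : Matrix (Fin N) (Fin N) ℝ) (v : Fin N → ℝ) :
    euc (A.mulVec v) = Matrix.toEuclideanCLM (𝕜 := ℝ) A (euc v) :=
  rfl

theorem transformed_normal_difference_estimate_general (N : ℕ)
    (κ : ℝ) (hκ1 : κ < 1)
    (n : Fin N → ℝ) (hn : ‖euc n‖ = 1)
    (A₁ A₂ : Matrix (Fin N) (Fin N) ℝ)
    (hA₁ : matOpNorm (A₁ - 1) ≤ κ) (hA₂ : matOpNorm (A₂ - 1) ≤ κ) :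
    A₁.mulVec n ≠ 0 ∧ A₂.mulVec n ≠ 0 ∧
      ‖(‖euc (A₂.mulVec n)‖)⁻¹ • euc (A₂.mulVec n) -
          (‖euc (A₁.mulVec n)‖)⁻¹ • euc (A₁.mulVec n)‖ ≤
        2 / (1 - κ) * matOpNorm (A₂ - A₁) := by
  simp only [matOpNorm, map_sub, map_one] at hA₁ hA₂ ⊢
  have hne : ∀ A : Matrix (Fin N) (Fin N) ℝ,
      ‖Matrix.toEuclideanCLM (𝕜 := ℝ) A - 1‖ ≤ κ → A.mulVec n ≠ 0 := by
    intro A hA hzero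
    have hlower :=
      (Matrix.toEuclideanCLM (𝕜 := ℝ) A).mul_norm_le_norm_apply_of_norm_sub_one_le hA (euc n)
    rw [← euc_mulVec, hzero, hn, mul_one, euc, WithLp.toLp_zero, norm_zero] at hlower
    linarith
  refine ⟨hne A₁ hA₁, hne A₂ hA₂, ?_⟩
  rw [euc_mulVec, euc_mulVec]
  exact ContinuousLinearMap.norm_normalize_apply_sub_le hκ1 hA₂ hn

/-- If `‖𝒜₁ - I‖ ≤ κ < 1` and `‖𝒜₂ - I‖ ≤ κ` and `|n| = 1`, then `𝒜₁n ≠ 0`, `𝒜₂n ≠ 0`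
and `|𝒜₂n/|𝒜₂n| - 𝒜₁n/|𝒜₁n|| ≤ (2/(1-κ)) ‖𝒜₂ - 𝒜₁‖`. -/
theorem transformed_normal_difference_estimate (N : ℕ) (hN : 1 ≤ N)
    (κ : ℝ) (hκ0 : 0 ≤ κ) (hκ1 : κ < 1)
    (n : Fin N → ℝ) (hn : ‖euc n‖ = 1)
    (A₁ A₂ : Matrix (Fin N) (Fin N) ℝ)
    (hA₁ : matOpNorm (A₁ - 1) ≤ κ) (hA₂ : matOpNorm (A₂ - 1) ≤ κ) :
    A₁.mulVec n ≠ 0 ∧ A₂.mulVec n ≠ 0 ∧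
      ‖(‖euc (A₂.mulVec n)‖)⁻¹ • euc (A₂.mulVec n) -
          (‖euc (A₁.mulVec n)‖)⁻¹ • euc (A₁.mulVec n)‖ ≤
        2 / (1 - κ) * matOpNorm (A₂ - A₁) :=
  transformed_normal_difference_estimate_general N κ hκ1 n hn A₁ A₂ hA₁ hA₂
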